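/- For every positive integer n, S_n(132) = S_n(123), where S_n(q) counts permutations of length n avoiding the pattern q. -/
import Mathlib


/-- `p` contains the pattern `q` (classical, non-consecutive sense). -/
def PermContains {n k : ℕ} (p : Equiv.Perm (Fin n)) (q : Equiv.Perm (Fin k)) : Prop :=
  ∃ f : Fin k ↪o Fin n, ∀ j r : Fin k, q j < q r ↔ p (f j) < p (f r)

/-- `p` avoids the pattern `q`. -/
def PermAvoids {n k : ℕ} (p : Equiv.Perm (Fin n)) (q : Equiv.Perm (Fin k)) : Prop :=
  ¬ PermContains p q

/-- `S n q` is the number of permutations of length `n` avoiding the pattern `q`. -/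
noncomputable def S (n : ℕ) {k : ℕ} (q : Equiv.Perm (Fin k)) : ℕ :=
  Nat.card {p : Equiv.Perm (Fin n) // PermAvoids p q}

/-- The pattern 132. -/
def p132 : Equiv.Perm (Fin 3) := Equiv.swap 1 2

/-- The pattern 123 is the identity permutation of length 3. -/
def p123 : Equiv.Perm (Fin 3) := 1


section Pattern
variable {n : ℕ}

/-- build an order embedding `Fin 3 ↪o Fin n` from `i < j < k`. -/
def emb3 {i j k : Fin n} (hij : i < j) (hjk : j < k) : Fin 3 ↪o Fin n :=
  OrderEmbedding.ofStrictMono ![i, j, k] (by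
    intro a b hab
    fin_cases a <;> fin_cases b <;>
      simp_all [Matrix.cons_val_zero, Matrix.cons_val_one] <;>
      first
        | exact hij
        | exact hjk
        | exact lt_trans hij hjk
        | omega)

lemma contains132_iff (p : Equiv.Perm (Fin n)) :
    PermContains p p132 ↔ ∃ i j k : Fin n, i < j ∧ j < k ∧ p i < p k ∧ p k < p j := by
  constructor
  · rintro ⟨f, hf⟩
    refine ⟨f 0, f 1, f 2, f.strictMono (by decide), f.strictMono (by decide), ?_, ?_⟩
    · exact (hf 0 2).1 (by decide)
    · exact (hf 2 1).1 (by decide)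
  · rintro ⟨i, j, k, hij, hjk, h1, h2⟩
    refine ⟨emb3 hij hjk, ?_⟩
    have hik : p i < p j := lt_trans h1 h2
    intro a b
    fin_cases a <;> fin_cases b <;>
      simp [emb3, OrderEmbedding.ofStrictMono, p132, Equiv.swap_apply_def] <;>
      first
        | exact h1
        | exact h2
        | exact hik
        | exact (lt_asymm h1)
        | exact (lt_asymm h2)
        | exact (lt_asymm hik)
        | exact h1.le
        | exact h2.le
        | exact hik.le
        | decide

lemma contains123_iff (p : Equiv.Perm (Fin n)) :
    PermContains p p123 ↔ ∃ i j k : Fin n, i < j ∧ j < k ∧ p i < p j ∧ p j < p k := by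
  constructor
  · rintro ⟨f, hf⟩
    refine ⟨f 0, f 1, f 2, f.strictMono (by decide), f.strictMono (by decide), ?_, ?_⟩
    · exact (hf 0 1).1 (by decide)
    · exact (hf 1 2).1 (by decide)
  · rintro ⟨i, j, k, hij, hjk, h1, h2⟩
    refine ⟨emb3 hij hjk, ?_⟩
    have hik : p i < p k := lt_trans h1 h2
    intro a b
    fin_cases a <;> fin_cases b <;>
      simp [emb3, OrderEmbedding.ofStrictMono, p123, Equiv.swap_apply_def] <;>
      first
        | exact h1
        | exact h2
        | exact hik
        | exact (lt_asymm h1)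
        | exact (lt_asymm h2)
        | exact (lt_asymm hik)
        | exact h1.le
        | exact h2.le
        | exact hik.le
        | decide

end Pattern

open Finset

namespace SS

variable {n : ℕ}

/-- `i` is a left-to-right-minimum position of `p`. -/
def IsMin (p : Equiv.Perm (Fin n)) (i : Fin n) : Prop := ∀ j, j < i → p i < p j

instance (p : Equiv.Perm (Fin n)) (i : Fin n) : Decidable (IsMin p i) := by
  unfold IsMin; infer_instance

/-- prefix minimum of `p` over positions `≤ i`. -/
def pm (p : Equiv.Perm (Fin n)) (i : Fin n) : Fin n :=
  ((Finset.Iic i).image p).min' ⟨p i, Finset.mem_image_of_mem _ (Finset.mem_Iic.2 le_rfl)⟩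

lemma pm_le (p : Equiv.Perm (Fin n)) {i j : Fin n} (h : j ≤ i) : pm p i ≤ p j :=
  Finset.min'_le _ _ (Finset.mem_image_of_mem _ (Finset.mem_Iic.2 h))

lemma pm_anti (p : Equiv.Perm (Fin n)) {i j : Fin n} (h : j ≤ i) : pm p i ≤ pm p j :=
  Finset.min'_subset _ (Finset.image_subset_image (Finset.Iic_subset_Iic.2 h))

lemma pm_mem (p : Equiv.Perm (Fin n)) (i : Fin n) : ∃ j, j ≤ i ∧ p j = pm p i := by
  have := Finset.min'_mem ((Finset.Iic i).image p)
    ⟨p i, Finset.mem_image_of_mem _ (Finset.mem_Iic.2 le_rfl)⟩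
  rw [Finset.mem_image] at this
  obtain ⟨j, hj, hpj⟩ := this
  exact ⟨j, Finset.mem_Iic.1 hj, hpj⟩

lemma pm_lt_self {p : Equiv.Perm (Fin n)} {i : Fin n} (h : ¬ IsMin p i) : pm p i < p i := by
  unfold IsMin at h
  push_neg at h
  obtain ⟨j, hji, hpj⟩ := h
  exact lt_of_le_of_lt (pm_le p hji.le) (lt_of_le_of_ne hpj (fun he => absurd (p.injective he) hji.ne))

/-- the greedy rearrangement keeping LTR minima; `b = true` picks maxima (→ 123-avoider),
`b = false` picks minima (→ 132-avoider). -/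
def gr (b : Bool) (p : Equiv.Perm (Fin n)) (i : Fin n) : Fin n :=
  if IsMin p i then p i
  else
    let used : Finset (Fin n) := (Finset.Iio i).attach.image (fun j => gr b p j.1)
    let s := (Finset.univ.filter (fun x => pm p i < x)) \ used
    (if b then s.max else s.min).getD (p i)
termination_by i.1
decreasing_by exact Fin.lt_def.mp (Finset.mem_Iio.1 j.2)

/-- values used by `gr` before position `i`. -/
def used (b : Bool) (p : Equiv.Perm (Fin n)) (i : Fin n) : Finset (Fin n) :=
  (Finset.Iio i).attach.image (fun j => gr b p j.1)

lemma gr_eq (b : Bool) (p : Equiv.Perm (Fin n)) (i : Fin n) :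
    gr b p i = if IsMin p i then p i
      else (if b then ((Finset.univ.filter (fun x => pm p i < x)) \ used b p i).max
            else ((Finset.univ.filter (fun x => pm p i < x)) \ used b p i).min).getD (p i) := by
  rw [gr]; rfl

lemma gr_min {b : Bool} {p : Equiv.Perm (Fin n)} {i : Fin n} (h : IsMin p i) :
    gr b p i = p i := by rw [gr_eq, if_pos h]

lemma mem_used {b : Bool} {p : Equiv.Perm (Fin n)} {i j : Fin n} (h : j < i) :
    gr b p j ∈ used b p i := by
  exact Finset.mem_image.2 ⟨⟨j, Finset.mem_Iio.2 h⟩, Finset.mem_attach _ _, rfl⟩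

lemma used_card_le (b : Bool) (p : Equiv.Perm (Fin n)) (i : Fin n) :
    (used b p i).card ≤ i.1 := by
  calc (used b p i).card ≤ (Finset.Iio i).attach.card := Finset.card_image_le
    _ = (Finset.Iio i).card := Finset.card_attach
    _ = i.1 := Fin.card_Iio i


theorem main (b : Bool) (p : Equiv.Perm (Fin n)) :
    ∀ i : Fin n, ¬IsMin p i → pm p i < gr b p i ∧ gr b p i ∉ used b p i := by
  suffices H : ∀ m, ∀ i : Fin n, i.1 < m → ¬IsMin p i →
      pm p i < gr b p i ∧ gr b p i ∉ used b p i by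
    intro i
    exact H (i.1 + 1) i (Nat.lt_succ_self _)
  intro m
  induction m with
  | zero => intro i hi; omega
  | succ m ih =>
    intro i hi hmin
    have IH : ∀ j : Fin n, j < i → ¬IsMin p j →
        pm p j < gr b p j ∧ gr b p j ∉ used b p j := by
      intro j hj hjm
      exact ih j (by have := Fin.lt_def.mp hj; omega) hjm
    have hge : ∀ j : Fin n, j < i → pm p i ≤ gr b p j := by
      intro j hj
      by_cases hjm : IsMin p j
      · rw [gr_min hjm]; exact pm_le p hj.le
      · exact le_trans (pm_anti p hj.le) (IH j hj hjm).1.le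
    obtain ⟨j0, hj0le, hpj0⟩ := pm_mem p i
    have hj0min : IsMin p j0 := by
      intro j hj
      have h1 : pm p i ≤ p j := pm_le p (le_trans hj.le hj0le)
      rw [← hpj0] at h1
      exact lt_of_le_of_ne h1 (fun he => absurd (p.injective he) hj.ne')
    have hj0i : j0 < i := lt_of_le_of_ne hj0le (by rintro rfl; exact hmin hj0min)
    have hvused : pm p i ∈ used b p i := by
      have := mem_used (b := b) (p := p) hj0i
      rwa [gr_min hj0min, hpj0] at this
    have hcard : (pm p i).1 + i.1 + 1 < n + 1 := by
      have hmaps : ∀ x ∈ Finset.Iio (pm p i), p.symm x ∈ Finset.Ioi i := by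
        intro x hx
        rw [Finset.mem_Iio] at hx
        rw [Finset.mem_Ioi]
        by_contra hle
        push_neg at hle
        have := pm_le p hle
        rw [Equiv.apply_symm_apply] at this
        exact absurd hx (not_lt.2 this)
      have hc := Finset.card_le_card_of_injOn (fun x => p.symm x) hmaps
        (p.symm.injective.injOn)
      rw [Fin.card_Iio, Fin.card_Ioi] at hc
      have := i.2
      omega
    have hne : ((Finset.univ.filter (fun x => pm p i < x)) \ used b p i).Nonempty := by
      by_contra hcon
      rw [Finset.not_nonempty_iff_eq_empty, Finset.sdiff_eq_empty_iff_subset] at hcon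
      have hsub : Finset.Ici (pm p i) ⊆ used b p i := by
        rw [← Finset.Ioi_insert]
        intro x hx
        rcases Finset.mem_insert.1 hx with rfl | hx'
        · exact hvused
        · exact hcon (Finset.mem_filter.2 ⟨Finset.mem_univ _, Finset.mem_Ioi.1 hx'⟩)
      have h1 := Finset.card_le_card hsub
      rw [Fin.card_Ici] at h1
      have h2 := used_card_le b p i
      omega
    have hsmem : gr b p i ∈ (Finset.univ.filter (fun x => pm p i < x)) \ used b p i := by
      rw [gr_eq, if_neg hmin]
      cases b
      · rw [← Finset.coe_min' hne]
        exact Finset.min'_mem _ _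
      · rw [← Finset.coe_max' hne]
        exact Finset.max'_mem _ _
    rw [Finset.mem_sdiff, Finset.mem_filter] at hsmem
    exact ⟨hsmem.1.2, hsmem.2⟩

lemma pm_le_gr (b : Bool) (p : Equiv.Perm (Fin n)) (i : Fin n) : pm p i ≤ gr b p i := by
  by_cases h : IsMin p i
  · rw [gr_min h]; exact pm_le p le_rfl
  · exact (main b p i h).1.le

/-- If `i` is a minimum position, greedily filled values before it are larger. -/
lemma gr_lt_of_min {b : Bool} {p : Equiv.Perm (Fin n)} {i j : Fin n}
    (hi : IsMin p i) (hj : j < i) : gr b p i < gr b p j := by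
  rw [gr_min hi]
  obtain ⟨j1, hj1le, hpj1⟩ := pm_mem p j
  have : p i < p j1 := hi j1 (lt_of_le_of_lt hj1le hj)
  calc p i < p j1 := this
    _ = pm p j := hpj1
    _ ≤ gr b p j := pm_le_gr b p j

lemma gr_injective (b : Bool) (p : Equiv.Perm (Fin n)) : Function.Injective (gr b p) := by
  intro i j hij
  by_contra hne
  rcases lt_or_gt_of_ne hne with h | h
  all_goals {
    first
    | (by_cases hm : IsMin p j
       · exact absurd hij (gr_lt_of_min hm h).ne'
       · exact (main b p j hm).2 (hij ▸ mem_used h))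
    | (by_cases hm : IsMin p i
       · exact absurd hij (gr_lt_of_min hm h).ne
       · exact (main b p i hm).2 (hij ▸ mem_used h)) }

lemma exists_min_pos {p : Equiv.Perm (Fin n)} {i : Fin n} (h : ¬IsMin p i) :
    ∃ j0, j0 < i ∧ IsMin p j0 ∧ p j0 = pm p i := by
  obtain ⟨j0, hj0le, hpj0⟩ := pm_mem p i
  have hj0min : IsMin p j0 := by
    intro j hj
    have h1 : pm p i ≤ p j := pm_le p (le_trans hj.le hj0le)
    rw [← hpj0] at h1
    exact lt_of_le_of_ne h1 (fun he => absurd (p.injective he) hj.ne')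
  exact ⟨j0, lt_of_le_of_ne hj0le (by rintro rfl; exact h hj0min), hj0min, hpj0⟩

noncomputable def grPerm (b : Bool) (p : Equiv.Perm (Fin n)) : Equiv.Perm (Fin n) :=
  Equiv.ofBijective (gr b p) (Finite.injective_iff_bijective.1 (gr_injective b p))

@[simp] lemma grPerm_apply (b : Bool) (p : Equiv.Perm (Fin n)) (i : Fin n) :
    grPerm b p i = gr b p i := rfl

lemma isMin_grPerm (b : Bool) (p : Equiv.Perm (Fin n)) (i : Fin n) :
    IsMin (grPerm b p) i ↔ IsMin p i := by
  constructor
  · intro h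
    by_contra hm
    obtain ⟨j0, hj0i, hj0min, hpj0⟩ := exists_min_pos hm
    have h1 : gr b p i < gr b p j0 := h j0 hj0i
    rw [gr_min hj0min, hpj0] at h1
    exact absurd (main b p i hm).1 (not_lt.2 h1.le)
  · intro h j hj
    exact gr_lt_of_min h hj

def SameData (p q : Equiv.Perm (Fin n)) : Prop :=
  ∀ i, (IsMin p i ↔ IsMin q i) ∧ (IsMin p i → p i = q i)

lemma SameData.symm {p q : Equiv.Perm (Fin n)} (h : SameData p q) : SameData q p :=
  fun i => ⟨(h i).1.symm, fun hq => ((h i).2 ((h i).1.2 hq)).symm⟩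

lemma SameData.trans {p q r : Equiv.Perm (Fin n)} (h1 : SameData p q) (h2 : SameData q r) :
    SameData p r :=
  fun i => ⟨(h1 i).1.trans (h2 i).1, fun h => ((h1 i).2 h).trans ((h2 i).2 ((h1 i).1.1 h))⟩

lemma sameData_grPerm (b : Bool) (p : Equiv.Perm (Fin n)) : SameData p (grPerm b p) :=
  fun i => ⟨(isMin_grPerm b p i).symm, fun h => (gr_min h).symm⟩

lemma grPerm_avoids_123 (p : Equiv.Perm (Fin n)) : PermAvoids (grPerm true p) p123 := by
  rw [PermAvoids, contains123_iff]
  rintro ⟨i1, i2, i3, h12, h23, hv1, hv2⟩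
  simp only [grPerm_apply] at hv1 hv2
  have h2m : ¬IsMin p i2 := fun hm => absurd hv1 (not_lt.2 (gr_lt_of_min hm h12).le)
  have h3m : ¬IsMin p i3 := fun hm => absurd hv2 (not_lt.2 (gr_lt_of_min hm h23).le)
  have hmem : gr true p i3 ∈ (Finset.univ.filter (fun x => pm p i2 < x)) \ used true p i2 := by
    rw [Finset.mem_sdiff, Finset.mem_filter]
    refine ⟨⟨Finset.mem_univ _, lt_trans (main true p i2 h2m).1 hv2⟩, ?_⟩
    intro hmem
    rw [used, Finset.mem_image] at hmem
    obtain ⟨⟨j, hj⟩, _, hje⟩ := hmem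
    have hji : j = i3 := gr_injective true p hje
    rw [hji] at hj
    exact absurd (Finset.mem_Iio.1 hj) (not_lt.2 h23.le)
  have hle : gr true p i3 ≤ gr true p i2 := by
    rw [gr_eq true p i2, if_neg h2m]
    simp only [if_true]
    rw [← Finset.coe_max' ⟨_, hmem⟩]
    exact Finset.le_max' _ _ hmem
  exact absurd hv2 (not_lt.2 hle)

lemma grPerm_avoids_132 (p : Equiv.Perm (Fin n)) : PermAvoids (grPerm false p) p132 := by
  rw [PermAvoids, contains132_iff]
  rintro ⟨i1, i2, i3, h12, h23, hv1, hv2⟩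
  simp only [grPerm_apply] at hv1 hv2
  have hv12 : gr false p i1 < gr false p i2 := lt_trans hv1 hv2
  have h2m : ¬IsMin p i2 := fun hm => absurd hv12 (not_lt.2 (gr_lt_of_min hm h12).le)
  have h3m : ¬IsMin p i3 := fun hm =>
    absurd hv1 (not_lt.2 (gr_lt_of_min hm (lt_trans h12 h23)).le)
  have hmem : gr false p i3 ∈ (Finset.univ.filter (fun x => pm p i2 < x)) \ used false p i2 := by
    rw [Finset.mem_sdiff, Finset.mem_filter]
    refine ⟨⟨Finset.mem_univ _, ?_⟩, ?_⟩
    · exact lt_of_le_of_lt (le_trans (pm_anti p h12.le) (pm_le_gr false p i1)) hv1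
    · intro hmem
      rw [used, Finset.mem_image] at hmem
      obtain ⟨⟨j, hj⟩, _, hje⟩ := hmem
      have hji : j = i3 := gr_injective false p hje
      rw [hji] at hj
      exact absurd (Finset.mem_Iio.1 hj) (not_lt.2 h23.le)
  have hle : gr false p i2 ≤ gr false p i3 := by
    rw [gr_eq false p i2, if_neg h2m]
    simp only [if_false, Bool.false_eq_true]
    rw [← Finset.coe_min' ⟨_, hmem⟩]
    exact Finset.min'_le _ _ hmem
  exact absurd hv2 (not_lt.2 hle)

section Uniqueness

lemma not_min_elim {p : Equiv.Perm (Fin n)} {i : Fin n} (h : ¬IsMin p i) :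
    ∃ j, j < i ∧ p j < p i := by
  unfold IsMin at h
  push_neg at h
  obtain ⟨j, hj, hpj⟩ := h
  exact ⟨j, hj, lt_of_le_of_ne hpj (fun he => absurd (p.injective he) hj.ne)⟩

lemma gt_of_unused_123 {p : Equiv.Perm (Fin n)} (hp : PermAvoids p p123) {i : Fin n}
    (hm : ¬IsMin p i) {u : Fin n} (hu : u ∉ (Finset.Iio i).image p) : u ≤ p i := by
  by_contra hlt
  push_neg at hlt
  obtain ⟨j, hji, hpj⟩ := not_min_elim hm
  have hik : i < p.symm u := by
    rcases lt_trichotomy (p.symm u) i with h | h | h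
    · exact absurd (Finset.mem_image.2 ⟨p.symm u, Finset.mem_Iio.2 h, p.apply_symm_apply u⟩) hu
    · rw [← h, Equiv.apply_symm_apply] at hlt; exact absurd hlt (lt_irrefl _)
    · exact h
  exact hp (contains123_iff p |>.2 ⟨j, i, p.symm u, hji, hik, hpj,
    by rw [Equiv.apply_symm_apply]; exact hlt⟩)

lemma gt_of_unused_132 {p : Equiv.Perm (Fin n)} (hp : PermAvoids p p132) {i : Fin n}
    (hm : ¬IsMin p i) {u : Fin n} (hu : u ∉ (Finset.Iio i).image p) (hpm : pm p i < u) :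
    p i ≤ u := by
  by_contra hlt
  push_neg at hlt
  obtain ⟨j0, hj0i, _, hpj0⟩ := exists_min_pos hm
  have hik : i < p.symm u := by
    rcases lt_trichotomy (p.symm u) i with h | h | h
    · exact absurd (Finset.mem_image.2 ⟨p.symm u, Finset.mem_Iio.2 h, p.apply_symm_apply u⟩) hu
    · rw [← h, Equiv.apply_symm_apply] at hlt; exact absurd hlt (lt_irrefl _)
    · exact h
  exact hp (contains132_iff p |>.2 ⟨j0, i, p.symm u, hj0i, hik,
    by rw [Equiv.apply_symm_apply, hpj0]; exact hpm,
    by rw [Equiv.apply_symm_apply]; exact hlt⟩)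

lemma step132 {p q : Equiv.Perm (Fin n)} (hp : PermAvoids p p132) {i : Fin n}
    (hm : ¬IsMin p i) (hqm : ¬IsMin q i) (hag : ∀ j, j < i → p j = q j) : p i ≤ q i := by
  have hnotmem : q i ∉ (Finset.Iio i).image p := by
    intro hmem
    rw [Finset.mem_image] at hmem
    obtain ⟨j, hj, hje⟩ := hmem
    rw [hag j (Finset.mem_Iio.1 hj)] at hje
    exact absurd (q.injective hje) (Finset.mem_Iio.1 hj).ne
  have hlt : pm p i < q i := by
    by_contra hle
    push_neg at hle
    apply hqm
    intro j hj
    have h1 : pm p i ≤ p j := pm_le p hj.le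
    rw [hag j hj] at h1
    exact lt_of_le_of_ne (le_trans hle h1) (fun he => absurd (q.injective he) hj.ne')
  exact gt_of_unused_132 hp hm hnotmem hlt

end Uniqueness


lemma step123 {p q : Equiv.Perm (Fin n)} (hq : PermAvoids q p123) {i : Fin n}
    (hm : ¬IsMin p i) (hqm : ¬IsMin q i) (hag : ∀ j, j < i → p j = q j) : p i ≤ q i := by
  apply gt_of_unused_123 hq hqm
  intro hmem
  rw [Finset.mem_image] at hmem
  obtain ⟨j, hj, hje⟩ := hmem
  rw [← hag j (Finset.mem_Iio.1 hj)] at hje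
  exact absurd (p.injective hje) (Finset.mem_Iio.1 hj).ne

lemma eq_of_same_123 {p q : Equiv.Perm (Fin n)} (hp : PermAvoids p p123)
    (hq : PermAvoids q p123) (hd : SameData p q) : p = q := by
  have key : ∀ m, ∀ i : Fin n, i.1 < m → p i = q i := by
    intro m
    induction m with
    | zero => intro i hi; omega
    | succ m ih =>
      intro i hi
      have hag : ∀ j, j < i → p j = q j := fun j hj =>
        ih j (by have := Fin.lt_def.mp hj; omega)
      by_cases hm : IsMin p i
      · exact (hd i).2 hm
      · have hqm : ¬IsMin q i := fun h => hm ((hd i).1.2 h)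
        exact le_antisymm (step123 hq hm hqm hag)
          (step123 hp hqm hm (fun j hj => (hag j hj).symm))
  exact Equiv.ext fun i => key (i.1 + 1) i (Nat.lt_succ_self _)

lemma eq_of_same_132 {p q : Equiv.Perm (Fin n)} (hp : PermAvoids p p132)
    (hq : PermAvoids q p132) (hd : SameData p q) : p = q := by
  have key : ∀ m, ∀ i : Fin n, i.1 < m → p i = q i := by
    intro m
    induction m with
    | zero => intro i hi; omega
    | succ m ih =>
      intro i hi
      have hag : ∀ j, j < i → p j = q j := fun j hj =>
        ih j (by have := Fin.lt_def.mp hj; omega)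
      by_cases hm : IsMin p i
      · exact (hd i).2 hm
      · have hqm : ¬IsMin q i := fun h => hm ((hd i).1.2 h)
        exact le_antisymm (step132 hp hm hqm hag)
          (step132 hq hqm hm (fun j hj => (hag j hj).symm))
  exact Equiv.ext fun i => key (i.1 + 1) i (Nat.lt_succ_self _)

/-- The Simion–Schmidt bijection. -/
noncomputable def theEquiv (n : ℕ) :
    {p : Equiv.Perm (Fin n) // PermAvoids p p132} ≃
      {p : Equiv.Perm (Fin n) // PermAvoids p p123} where
  toFun x := ⟨grPerm true x.1, grPerm_avoids_123 x.1⟩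
  invFun x := ⟨grPerm false x.1, grPerm_avoids_132 x.1⟩
  left_inv x := Subtype.ext
    (eq_of_same_132 x.2 (grPerm_avoids_132 _)
      ((sameData_grPerm true x.1).trans (sameData_grPerm false _))).symm
  right_inv x := Subtype.ext
    (eq_of_same_123 x.2 (grPerm_avoids_123 _)
      ((sameData_grPerm false x.1).trans (sameData_grPerm true _))).symm

end SS

theorem sn_132_eq_sn_123 (n : ℕ) (hn : 0 < n) : S n p132 = S n p123 := by
  unfold S
  exact Nat.card_congr (SS.theEquiv n)
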